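/- Let K ≥ 0, let 0 ≤ λ < 1/2, and let G : ℝ → ℝ be a measurable, nonnegative function vanishing on (−∞,0) such that ∫₀^∞ G(t) dt = 1 and G(t) ≤ K · t^{−3/2} for all t > 0. Then for every t > 0, ∑_{n=1}^∞ (2λ)^n · G^{∗n}(t) ≤ K · (∑_{n=1}^∞ (2λ)^n n^{5/2}) · t^{−3/2}, where the constant ∑_{n=1}^∞ (2λ)^n n^{5/2} is finite. -/

import Mathlib

open Filter Set MeasureTheory

/-- Convolution of two functions vanishing on `(-∞,0)`:
`(f ∗ g)(t) = ∫₀ᵗ f(s) g(t-s) ds`. -/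
noncomputable def conv (f g : ℝ → ℝ) : ℝ → ℝ :=
  fun t => ∫ s in (0:ℝ)..t, f s * g (t - s)

/-- `convPow G n` is the `(n+1)`-st convolution power `G^{∗(n+1)}`:
`convPow G 0 = G` and `convPow G (n+1) = (convPow G n) ∗ G`. -/
noncomputable def convPow (G : ℝ → ℝ) : ℕ → ℝ → ℝ
  | 0 => G
  | n + 1 => conv (convPow G n) G

/-!
Let `fₙ = G^{∗(n+1)}`; all `fₙ` are probability densities on `[0, ∞)`. Splitting the
integral defining `(fₙ ∗ G)(t)` at a point `a` bounds it by
`sup_{u ≥ t-a} G u + sup_{s > a} fₙ s`. With `a = (n+1)t/(n+2)` the tail bound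
`G t ≤ K t^{-p}` propagates by induction to `fₙ t ≤ K (n+1)^{p+1} t^{-p}`, and summing
against the geometric weights `(2λ)^{n+1}` gives the theorem (`p = 3/2`).
-/

open scoped Convolution

section Convolution

variable {f g : ℝ → ℝ}

lemma mul_comp_sub_eq_indicator_Icc (hf : ∀ t < 0, f t = 0) (hg : ∀ t < 0, g t = 0) (t : ℝ) :
    (fun s => f s * g (t - s)) = (Icc 0 t).indicator (fun s => f s * g (t - s)) := by
  ext s
  by_cases hs : s ∈ Icc 0 t
  · rw [indicator_of_mem hs]
  · rw [indicator_of_notMem hs]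
    rcases not_and_or.1 hs with hs | hs
    · rw [hf s (not_le.1 hs), zero_mul]
    · rw [hg (t - s) (by linarith [not_le.1 hs]), mul_zero]

lemma conv_eq_convolution (hf : ∀ t < 0, f t = 0) (hg : ∀ t < 0, g t = 0) :
    conv f g = f ⋆ g := by
  ext t
  have hφ := mul_comp_sub_eq_indicator_Icc hf hg t
  simp only [conv, convolution_def, ContinuousLinearMap.lsmul_apply, smul_eq_mul]
  rcases le_or_gt 0 t with ht | ht
  · rw [intervalIntegral.integral_of_le ht, ← integral_Icc_eq_integral_Ioc,
      ← integral_indicator measurableSet_Icc, ← hφ]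
  · rw [hφ, Icc_eq_empty (not_le.2 ht), indicator_empty]
    simp

end Convolution

structure IsProbDensityOnNonneg (f : ℝ → ℝ) : Prop where
  nonneg : ∀ t, 0 ≤ f t
  eq_zero_of_neg : ∀ t < 0, f t = 0
  integrable : Integrable f
  integral_eq_one : ∫ t, f t = 1

namespace IsProbDensityOnNonneg

variable {f g : ℝ → ℝ}

lemma of_lintegral (hm : Measurable f) (hnn : ∀ t, 0 ≤ f t) (hz : ∀ t < 0, f t = 0)
    (hint : ∫⁻ t in Ioi 0, ENNReal.ofReal (f t) = 1) : IsProbDensityOnNonneg f := by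
  have hsupp : (fun t => ENNReal.ofReal (f t)).support ⊆ Ici 0 := fun t ht =>
    mem_Ici.2 (not_lt.1 fun hneg => ht (by simp [hz t hneg]))
  have hlint : ∫⁻ t, ENNReal.ofReal (f t) = 1 := by
    rw [← setLIntegral_eq_of_support_subset hsupp, ← restrict_Ioi_eq_restrict_Ici, hint]
  have hnn_ae : 0 ≤ᵐ[volume] f := Eventually.of_forall hnn
  refine ⟨hnn, hz, ⟨hm.aestronglyMeasurable, ?_⟩, ?_⟩
  · rw [hasFiniteIntegral_iff_ofReal hnn_ae, hlint]
    exact ENNReal.one_lt_top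
  · rw [integral_eq_lintegral_of_nonneg_ae hnn_ae hm.aestronglyMeasurable, hlint,
      ENNReal.toReal_one]

protected lemma conv (hf : IsProbDensityOnNonneg f) (hg : IsProbDensityOnNonneg g) :
    IsProbDensityOnNonneg (conv f g) := by
  rw [conv_eq_convolution hf.eq_zero_of_neg hg.eq_zero_of_neg]
  refine ⟨fun t => ?_, fun t ht => ?_, hf.integrable.integrable_convolution _ hg.integrable, ?_⟩
  · exact integral_nonneg fun s => mul_nonneg (hf.nonneg s) (hg.nonneg _)
  · rw [convolution_def]
    simp only [ContinuousLinearMap.lsmul_apply, smul_eq_mul]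
    rw [mul_comp_sub_eq_indicator_Icc hf.eq_zero_of_neg hg.eq_zero_of_neg,
      Icc_eq_empty (not_le.2 ht), indicator_empty, integral_zero]
  · rw [integral_convolution _ hf.integrable hg.integrable, hf.integral_eq_one,
      hg.integral_eq_one, ContinuousLinearMap.lsmul_apply, smul_eq_mul, mul_one]

lemma convPow (hG : IsProbDensityOnNonneg g) (n : ℕ) : IsProbDensityOnNonneg (convPow g n) := by
  induction n with
  | zero => exact hG
  | succ n ih => exact ih.conv hG

lemma conv_le_add (hf : IsProbDensityOnNonneg f) (hg : IsProbDensityOnNonneg g) {t a cf cg : ℝ}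
    (hcf : ∀ s ∈ Ioi a, f s ≤ cf) (hcg : ∀ u ∈ Ici (t - a), g u ≤ cg) :
    conv f g t ≤ cg + cf := by
  have hcf0 : 0 ≤ cf := (hf.nonneg _).trans (hcf (a + 1) (by simp))
  have hcg0 : 0 ≤ cg := (hg.nonneg _).trans (hcg (t - a) (mem_Ici.2 le_rfl))
  have hpt : ∀ s, f s * g (t - s) ≤ cg * f s + cf * g (t - s) := fun s => by
    rcases le_or_gt s a with hsa | hsa
    · rcases lt_or_ge s 0 with hs0 | hs0
      · rw [hf.eq_zero_of_neg s hs0]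
        simpa using mul_nonneg hcf0 (hg.nonneg _)
      · nlinarith [hcg (t - s) (by simp only [mem_Ici]; linarith), hf.nonneg s,
          mul_nonneg hcf0 (hg.nonneg (t - s))]
    · nlinarith [hcf s hsa, hg.nonneg (t - s), mul_nonneg hcg0 (hf.nonneg s)]
  calc conv f g t = ∫ s, f s * g (t - s) := by
        rw [conv_eq_convolution hf.eq_zero_of_neg hg.eq_zero_of_neg, convolution_def]
        simp only [ContinuousLinearMap.lsmul_apply, smul_eq_mul]
    _ ≤ ∫ s, (cg * f s + cf * g (t - s)) :=
        integral_mono_of_nonneg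
          (Eventually.of_forall fun s => mul_nonneg (hf.nonneg s) (hg.nonneg _))
          ((hf.integrable.const_mul cg).add ((hg.integrable.comp_sub_left t).const_mul cf))
          (Eventually.of_forall hpt)
    _ = cg + cf := by
        rw [integral_add (hf.integrable.const_mul cg)
            ((hg.integrable.comp_sub_left t).const_mul cf), integral_const_mul,
          integral_const_mul, integral_sub_left_eq_self, hf.integral_eq_one, hg.integral_eq_one,
          mul_one, mul_one]

end IsProbDensityOnNonneg

lemma le_mul_rpow_neg_of_le_of_mem_Ici {f : ℝ → ℝ} {C p a : ℝ} (hC : 0 ≤ C) (hp : 0 ≤ p)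
    (ha : 0 < a) (hf : ∀ s, 0 < s → f s ≤ C * s ^ (-p)) {s : ℝ} (hs : s ∈ Ici a) :
    f s ≤ C * a ^ (-p) :=
  (hf s (ha.trans_le hs)).trans <|
    mul_le_mul_of_nonneg_left (Real.rpow_le_rpow_of_nonpos ha hs (neg_nonpos.2 hp)) hC

lemma rpow_neg_div_add_mul_rpow_neg_mul_div {b t : ℝ} (hb : 0 < b) (ht : 0 < t) (p : ℝ) :
    (t / (b + 1)) ^ (-p) + b ^ (p + 1) * (b * t / (b + 1)) ^ (-p) =
      (b + 1) ^ (p + 1) * t ^ (-p) := by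
  have hc : 0 < b + 1 := by linarith
  rw [mul_div_assoc, Real.mul_rpow hb.le (by positivity), Real.div_rpow ht.le hc.le,
    Real.rpow_neg hc.le p, div_inv_eq_mul, Real.rpow_add_one hb.ne', Real.rpow_add_one hc.ne',
    Real.rpow_neg hb.le p]
  field_simp
  ring

lemma convPow_le_mul_rpow_neg {G : ℝ → ℝ} (hG : IsProbDensityOnNonneg G)
    {K p : ℝ} (hK : 0 ≤ K) (hp : 0 ≤ p) (hb : ∀ t, 0 < t → G t ≤ K * t ^ (-p)) (n : ℕ)
    {t : ℝ} (ht : 0 < t) : convPow G n t ≤ K * ((n : ℝ) + 1) ^ (p + 1) * t ^ (-p) := by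
  induction n generalizing t with
  | zero => simpa [convPow] using hb t ht
  | succ n ih =>
    set b : ℝ := n + 1
    have hb0 : 0 < b := by positivity
    set a := b * t / (b + 1)
    have ha : 0 < a := by positivity
    have hta : t - a = t / (b + 1) := by simp only [a]; field_simp; ring
    calc convPow G (n + 1) t = conv (convPow G n) G t := rfl
      _ ≤ K * (t - a) ^ (-p) + K * b ^ (p + 1) * a ^ (-p) :=
        (hG.convPow n).conv_le_add hG
          (fun s hs => le_mul_rpow_neg_of_le_of_mem_Ici (by positivity) hp ha (fun _ => ih)
            (mem_Ici.2 hs.le))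
          (fun u hu => le_mul_rpow_neg_of_le_of_mem_Ici hK hp (by rw [hta]; positivity) hb hu)
      _ = K * (b + 1) ^ (p + 1) * t ^ (-p) := by
        rw [hta, mul_assoc K, ← mul_add, rpow_neg_div_add_mul_rpow_neg_mul_div hb0 ht, mul_assoc]
      _ = K * (((n + 1 : ℕ) : ℝ) + 1) ^ (p + 1) * t ^ (-p) := by simp only [b, Nat.cast_succ]

lemma summable_pow_succ_mul_rpow {r : ℝ} (hr0 : 0 ≤ r) (hr1 : r < 1) (q : ℝ) :
    Summable fun n : ℕ => r ^ (n + 1) * ((n + 1 : ℕ) : ℝ) ^ q := by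
  have hmaj : Summable fun n : ℕ => ((n + 1 : ℕ) : ℝ) ^ ⌈q⌉₊ * r ^ (n + 1) :=
    (summable_nat_add_iff (f := fun n : ℕ => (n : ℝ) ^ ⌈q⌉₊ * r ^ n) 1).2
      (summable_pow_mul_geometric_of_norm_lt_one _ (by rwa [Real.norm_of_nonneg hr0]))
  refine hmaj.of_nonneg_of_le (fun n => by positivity) fun n => ?_
  have hn : (1 : ℝ) ≤ ((n + 1 : ℕ) : ℝ) := by exact_mod_cast Nat.le_add_left 1 n
  rw [mul_comm, ← Real.rpow_natCast _ ⌈q⌉₊]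
  exact mul_le_mul_of_nonneg_right (Real.rpow_le_rpow_of_exponent_le hn (Nat.le_ceil q))
    (pow_nonneg hr0 _)

/-- Lemma 3.8 ('Expected number of dual 3-paths'), analytic form: for `0 ≤ λ < 1/2`,
`∑_{n=1}^∞ (2λ)^n G^{∗n}(t) ≤ K (∑_{n=1}^∞ (2λ)^n n^{5/2}) t^{-3/2}`, where the
constant series is finite (here `convPow G n = G^{∗(n+1)}`). -/
theorem sum_convolution_powers_bound (K lam : ℝ) (hK : 0 ≤ K)
    (h0 : 0 ≤ lam) (h1 : lam < 1/2)
    (G : ℝ → ℝ) (hm : Measurable G) (hnn : ∀ t, 0 ≤ G t)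
    (hz : ∀ t < (0:ℝ), G t = 0)
    (hint : ∫⁻ t in Ioi (0:ℝ), ENNReal.ofReal (G t) = 1)
    (hb : ∀ t, 0 < t → G t ≤ K * t ^ (-(3:ℝ)/2)) :
    Summable (fun n : ℕ => (2 * lam) ^ (n + 1) * ((n + 1 : ℕ) : ℝ) ^ ((5:ℝ)/2)) ∧
    ∀ t : ℝ, 0 < t →
      (∑' n : ℕ, (2 * lam) ^ (n + 1) * convPow G n t) ≤
        K * (∑' n : ℕ, (2 * lam) ^ (n + 1) * ((n + 1 : ℕ) : ℝ) ^ ((5:ℝ)/2)) *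
          t ^ (-(3:ℝ)/2) := by
  have hG := IsProbDensityOnNonneg.of_lintegral hm hnn hz hint
  have hr : 0 ≤ 2 * lam := by linarith
  have hS := summable_pow_succ_mul_rpow hr (by linarith) ((5:ℝ)/2)
  refine ⟨hS, fun t ht => ?_⟩
  have hterm (n : ℕ) : (2 * lam) ^ (n + 1) * convPow G n t
      ≤ (2 * lam) ^ (n + 1) * ((n + 1 : ℕ) : ℝ) ^ ((5:ℝ)/2) * (K * t ^ (-(3:ℝ)/2)) := by
    have h := convPow_le_mul_rpow_neg hG hK (p := 3/2) (by norm_num)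
      (by simpa only [neg_div] using hb) n ht
    rw [show (3:ℝ)/2 + 1 = 5/2 by norm_num, ← neg_div] at h
    calc (2 * lam) ^ (n + 1) * convPow G n t ≤ _ := mul_le_mul_of_nonneg_left h (pow_nonneg hr _)
      _ = _ := by push_cast; ring
  calc (∑' n : ℕ, (2 * lam) ^ (n + 1) * convPow G n t)
      ≤ ∑' n : ℕ,
          (2 * lam) ^ (n + 1) * ((n + 1 : ℕ) : ℝ) ^ ((5:ℝ)/2) * (K * t ^ (-(3:ℝ)/2)) := by
        have hnn' (n : ℕ) : 0 ≤ (2 * lam) ^ (n + 1) * convPow G n t :=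
          mul_nonneg (pow_nonneg hr _) ((hG.convPow n).nonneg t)
        exact ((hS.mul_right _).of_nonneg_of_le hnn' hterm).tsum_le_tsum hterm (hS.mul_right _)
    _ = _ := by rw [tsum_mul_right]; ring
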